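/- Let v₁, v₂, v₃ ∈ ℝ³ be the vertices of an equilateral triangle lying in a plane H, and let v₄, v₅ ∈ ℝ³ be reflections of one another through H, not lying in H, each equidistant from v₁, v₂, v₃ (a triangular bipyramid). Set ε = ∠(v₁, v₄, v₂). Then: (i) all six apex face angles ∠(vᵢ, v₄, vⱼ) and ∠(vᵢ, v₅, vⱼ) (1 ≤ i < j ≤ 3) equal ε; (ii) the angle deficit at v₄, defined as 2π − (∠(v₁,v₄,v₂) + ∠(v₂,v₄,v₃) + ∠(v₃,v₄,v₁)), equals 2π − 3ε, and likewise at v₅; (iii) the angle deficit at each equatorial vertex vᵢ, defined as 2π − (∠(vⱼ,vᵢ,v₄) + ∠(vₖ,vᵢ,v₄) + ∠(vⱼ,vᵢ,v₅) + ∠(vₖ,vᵢ,v₅)) where {j,k} = {1,2,3}\{i}, equals 2ε. Consequently, if 0 < ε < π/3, exactly two of the five vertices have angle deficit ≥ π. -/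

import Mathlib

open EuclideanGeometry Real

/-!
Every apex face is an isosceles triangle with legs `dist v₄ vᵢ` and base `s`, so by SSS all
apex angles at `v₄` agree, and each base angle is `(π - ε) / 2`. The reflection in `H` fixes
`v₁, v₂, v₃` and swaps the apexes, so every angle involving `v₅` equals the corresponding
angle involving `v₄`. Hence an equatorial vertex carries four angles `(π - ε) / 2`, of total
`2π - 2ε`.
-/

variable {V P : Type*} [NormedAddCommGroup V] [InnerProductSpace ℝ V] [MetricSpace P]
  [NormedAddTorsor V P]

lemma angle_eq_of_side_side_side {a b c a' b' c' : P} (hab : dist a b = dist a' b')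
    (hbc : dist b c = dist b' c') (hca : dist c a = dist c' a') : ∠ a b c = ∠ a' b' c' :=
  angle_eq_of_congruent (side_side_side hab hbc hca) 0 1 2

lemma angle_eq_pi_sub_angle_div_two_of_dist_eq {a b p : P} (h : dist p a = dist p b)
    (hpa : p ≠ a) : ∠ b a p = (π - ∠ a p b) / 2 := by
  have hsum := angle_add_angle_add_angle_eq_pi b hpa
  have hiso := angle_eq_angle_of_dist_eq h
  rw [angle_comm p a b] at hiso
  linarith

section Reflection

variable {s : AffineSubspace ℝ P} [Nonempty s] [s.direction.HasOrthogonalProjection]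
  {a b : P}

lemma angle_reflection_mid_of_mem (ha : a ∈ s) (hb : b ∈ s) (p : P) :
    ∠ a (reflection s p) b = ∠ a p b := by
  conv_lhs => rw [← (reflection_eq_self_iff a).2 ha, ← (reflection_eq_self_iff b).2 hb]
  exact (reflection s).toAffineIsometry.angle_map a p b

lemma angle_reflection_right_of_mem (ha : a ∈ s) (hb : b ∈ s) (p : P) :
    ∠ a b (reflection s p) = ∠ a b p := by
  conv_lhs => rw [← (reflection_eq_self_iff a).2 ha, ← (reflection_eq_self_iff b).2 hb]
  exact (reflection s).toAffineIsometry.angle_map a b p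

end Reflection

section Pyramid

variable {a b c p : P} {d : ℝ} (hab : dist a b = d) (hbc : dist b c = d) (hca : dist c a = d)
  (hp : dist p a = dist p b ∧ dist p b = dist p c)
include hab hbc hca hp

lemma angle_apex_eq_of_equilateral : ∠ b p c = ∠ a p b ∧ ∠ c p a = ∠ a p b := by
  obtain ⟨hpab, hpbc⟩ := hp
  refine ⟨angle_eq_of_side_side_side ?_ ?_ ?_, angle_eq_of_side_side_side ?_ ?_ ?_⟩
  · rw [dist_comm b p, dist_comm a p, hpab]
  · rw [hpbc]
  · rw [dist_comm c b, dist_comm b a, hbc, hab]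
  · rw [dist_comm c p, dist_comm a p, hpab, hpbc]
  · rw [hpab]
  · rw [dist_comm b a, hab, ← hca, dist_comm]

lemma angle_add_angle_base_of_equilateral (hpa : p ≠ a) :
    ∠ b a p + ∠ c a p = π - ∠ a p b := by
  have hb := angle_eq_pi_sub_angle_div_two_of_dist_eq hp.1 hpa
  have hc := angle_eq_pi_sub_angle_div_two_of_dist_eq (hp.1.trans hp.2) hpa
  have hca' := (angle_apex_eq_of_equilateral hab hbc hca hp).2
  rw [angle_comm] at hca'
  linarith

end Pyramid

theorem bipyramid_two_sharp_general
    (v₁ v₂ v₃ v₄ v₅ : EuclideanSpace ℝ (Fin 3)) (s : ℝ)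
    (h12 : dist v₁ v₂ = s) (h23 : dist v₂ v₃ = s) (h31 : dist v₃ v₁ = s)
    (H : AffineSubspace ℝ (EuclideanSpace ℝ (Fin 3)))
    [Nonempty H] [Submodule.HasOrthogonalProjection H.direction]
    (h1H : v₁ ∈ H) (h2H : v₂ ∈ H) (h3H : v₃ ∈ H) (h4H : v₄ ∉ H)
    (h5 : v₅ = EuclideanGeometry.reflection H v₄)
    (heq4 : dist v₄ v₁ = dist v₄ v₂ ∧ dist v₄ v₂ = dist v₄ v₃)
    (ε : ℝ) (hε : ε = ∠ v₁ v₄ v₂) :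
    (∠ v₁ v₄ v₂ = ε ∧ ∠ v₂ v₄ v₃ = ε ∧ ∠ v₃ v₄ v₁ = ε ∧
     ∠ v₁ v₅ v₂ = ε ∧ ∠ v₂ v₅ v₃ = ε ∧ ∠ v₃ v₅ v₁ = ε) ∧
    (2 * π - (∠ v₁ v₄ v₂ + ∠ v₂ v₄ v₃ + ∠ v₃ v₄ v₁) = 2 * π - 3 * ε ∧
     2 * π - (∠ v₁ v₅ v₂ + ∠ v₂ v₅ v₃ + ∠ v₃ v₅ v₁) = 2 * π - 3 * ε) ∧
    (2 * π - (∠ v₂ v₁ v₄ + ∠ v₃ v₁ v₄ + ∠ v₂ v₁ v₅ + ∠ v₃ v₁ v₅) = 2 * ε ∧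
     2 * π - (∠ v₁ v₂ v₄ + ∠ v₃ v₂ v₄ + ∠ v₁ v₂ v₅ + ∠ v₃ v₂ v₅) = 2 * ε ∧
     2 * π - (∠ v₁ v₃ v₄ + ∠ v₂ v₃ v₄ + ∠ v₁ v₃ v₅ + ∠ v₂ v₃ v₅) = 2 * ε) ∧
    (0 < ε → ε < π / 3 →
      (2 * π - (∠ v₁ v₄ v₂ + ∠ v₂ v₄ v₃ + ∠ v₃ v₄ v₁) ≥ π ∧
       2 * π - (∠ v₁ v₅ v₂ + ∠ v₂ v₅ v₃ + ∠ v₃ v₅ v₁) ≥ π ∧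
       2 * π - (∠ v₂ v₁ v₄ + ∠ v₃ v₁ v₄ + ∠ v₂ v₁ v₅ + ∠ v₃ v₁ v₅) < π ∧
       2 * π - (∠ v₁ v₂ v₄ + ∠ v₃ v₂ v₄ + ∠ v₁ v₂ v₅ + ∠ v₃ v₂ v₅) < π ∧
       2 * π - (∠ v₁ v₃ v₄ + ∠ v₂ v₃ v₄ + ∠ v₁ v₃ v₅ + ∠ v₂ v₃ v₅) < π)) := by
  subst h5 hε
  simp only [angle_reflection_mid_of_mem, angle_reflection_right_of_mem, h1H, h2H, h3H]
  have hne : ∀ v ∈ H, v₄ ≠ v := fun v hv h ↦ h4H (h ▸ hv)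
  obtain ⟨a23, a31⟩ := angle_apex_eq_of_equilateral h12 h23 h31 heq4
  have e1 := angle_add_angle_base_of_equilateral h12 h23 h31 heq4 (hne v₁ h1H)
  have e2 := angle_add_angle_base_of_equilateral h23 h31 h12
    ⟨heq4.2, (heq4.1.trans heq4.2).symm⟩ (hne v₂ h2H)
  have e3 := angle_add_angle_base_of_equilateral h31 h12 h23
    ⟨(heq4.1.trans heq4.2).symm, heq4.1⟩ (hne v₃ h3H)
  refine ⟨⟨trivial, a23, a31, trivial, a23, a31⟩, ⟨?_, ?_⟩, ⟨?_, ?_, ?_⟩,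
    fun _ _ ↦ ⟨?_, ?_, ?_, ?_, ?_⟩⟩ <;> linarith [pi_pos]

/-- A triangular bipyramid over an equilateral base: all six apex face angles
equal `ε`, both apexes have angle deficit `2π − 3ε`, each equatorial vertex
has angle deficit `2ε`; hence for `0 < ε < π/3` exactly the two apexes (of the
five vertices) have angle deficit at least `π`. -/
theorem bipyramid_two_sharp
    (v₁ v₂ v₃ v₄ v₅ : EuclideanSpace ℝ (Fin 3)) (s : ℝ) (hs : 0 < s)
    (h12 : dist v₁ v₂ = s) (h23 : dist v₂ v₃ = s) (h31 : dist v₃ v₁ = s)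
    (H : AffineSubspace ℝ (EuclideanSpace ℝ (Fin 3)))
    [Nonempty H] [Submodule.HasOrthogonalProjection H.direction]
    (hplane : Module.finrank ℝ H.direction = 2)
    (h1H : v₁ ∈ H) (h2H : v₂ ∈ H) (h3H : v₃ ∈ H) (h4H : v₄ ∉ H)
    (h5 : v₅ = EuclideanGeometry.reflection H v₄)
    (heq4 : dist v₄ v₁ = dist v₄ v₂ ∧ dist v₄ v₂ = dist v₄ v₃)
    (heq5 : dist v₅ v₁ = dist v₅ v₂ ∧ dist v₅ v₂ = dist v₅ v₃)
    (ε : ℝ) (hε : ε = ∠ v₁ v₄ v₂) :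
    (∠ v₁ v₄ v₂ = ε ∧ ∠ v₂ v₄ v₃ = ε ∧ ∠ v₃ v₄ v₁ = ε ∧
     ∠ v₁ v₅ v₂ = ε ∧ ∠ v₂ v₅ v₃ = ε ∧ ∠ v₃ v₅ v₁ = ε) ∧
    (2 * π - (∠ v₁ v₄ v₂ + ∠ v₂ v₄ v₃ + ∠ v₃ v₄ v₁) = 2 * π - 3 * ε ∧
     2 * π - (∠ v₁ v₅ v₂ + ∠ v₂ v₅ v₃ + ∠ v₃ v₅ v₁) = 2 * π - 3 * ε) ∧
    (2 * π - (∠ v₂ v₁ v₄ + ∠ v₃ v₁ v₄ + ∠ v₂ v₁ v₅ + ∠ v₃ v₁ v₅) = 2 * ε ∧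
     2 * π - (∠ v₁ v₂ v₄ + ∠ v₃ v₂ v₄ + ∠ v₁ v₂ v₅ + ∠ v₃ v₂ v₅) = 2 * ε ∧
     2 * π - (∠ v₁ v₃ v₄ + ∠ v₂ v₃ v₄ + ∠ v₁ v₃ v₅ + ∠ v₂ v₃ v₅) = 2 * ε) ∧
    (0 < ε → ε < π / 3 →
      (2 * π - (∠ v₁ v₄ v₂ + ∠ v₂ v₄ v₃ + ∠ v₃ v₄ v₁) ≥ π ∧
       2 * π - (∠ v₁ v₅ v₂ + ∠ v₂ v₅ v₃ + ∠ v₃ v₅ v₁) ≥ π ∧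
       2 * π - (∠ v₂ v₁ v₄ + ∠ v₃ v₁ v₄ + ∠ v₂ v₁ v₅ + ∠ v₃ v₁ v₅) < π ∧
       2 * π - (∠ v₁ v₂ v₄ + ∠ v₃ v₂ v₄ + ∠ v₁ v₂ v₅ + ∠ v₃ v₂ v₅) < π ∧
       2 * π - (∠ v₁ v₃ v₄ + ∠ v₂ v₃ v₄ + ∠ v₁ v₃ v₅ + ∠ v₂ v₃ v₅) < π)) :=
  bipyramid_two_sharp_general v₁ v₂ v₃ v₄ v₅ s h12 h23 h31 H h1H h2H h3H h4H h5 heq4 ε hε
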